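/- arXiv:2108.07967 — 2 statements merged into one kernel-verified Lean document; each statement's English description precedes it below -/
import Mathlib

section
/- For every point x in an open set Ω ⊊ ℝⁿ, the integral ∫_{ℝⁿ∖Ω} |x-y|^{-(n+2σ)} dy is bounded above by C(n,σ)/m_{2σ}(x)^{2σ}, where the bound comes from integrating along rays: ∫_{ℝⁿ∖Ω} |x-y|^{-(n+2σ)} dy ≤ ∫_{S^{n-1}} (2σ d_{ω,Ω}(x)^{2σ})^{-1} dω. -/
/-!
Translate `x` to the origin and pass to polar coordinates `z = r ω`. Along the ray in direction
`ω` the integrand becomes `r ^ (n - 1) * r ^ (-(n + 2σ)) = r ^ (-(1 + 2σ))`, supported on those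
`r > 0` with `x + r ω ∉ Ω`, all of which satisfy `r ≥ d_{ω,Ω}(x) > 0`; and
`∫_d^∞ r ^ (-(1 + 2σ)) dr = 1 / (2σ d ^ (2σ))`.
-/

open MeasureTheory

/-- The ray distance `d_{ω,Ω}(x) = inf{ |t| : x + tω ∉ Ω }`. -/
noncomputable def rayDist (n : ℕ) (Ω : Set (EuclideanSpace ℝ (Fin n)))
    (x : EuclideanSpace ℝ (Fin n)) (ω : EuclideanSpace ℝ (Fin n)) : ℝ :=
  sInf {r : ℝ | ∃ t : ℝ, x + t • ω ∉ Ω ∧ r = |t|}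

open Set Metric
open scoped ENNReal

theorem lintegral_volumeIoiPow (n : ℕ) {g : ℝ → ℝ≥0∞} (hg : Measurable g) :
    ∫⁻ r, g r ∂Measure.volumeIoiPow n =
      ∫⁻ r in Ioi (0 : ℝ), ENNReal.ofReal (r ^ n) * g r := by
  calc ∫⁻ r, g r ∂Measure.volumeIoiPow n
      = ∫⁻ r : Ioi (0 : ℝ), ENNReal.ofReal (r.1 ^ n) * g r ∂volume.comap Subtype.val :=
        lintegral_withDensity_eq_lintegral_mul _ (by fun_prop) (hg.comp measurable_subtype_coe)
    _ = _ := lintegral_subtype_comap measurableSet_Ioi fun r => ENNReal.ofReal (r ^ n) * g r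

section Polar

variable {E : Type*} [NormedAddCommGroup E] [NormedSpace ℝ E] [FiniteDimensional ℝ E]
  [MeasurableSpace E] [BorelSpace E] [Nontrivial E] (μ : Measure E) [μ.IsAddHaarMeasure]

theorem lintegral_eq_lintegral_sphere_lintegral_Ioi {f : E → ℝ≥0∞} (hf : Measurable f) :
    ∫⁻ z, f z ∂μ = ∫⁻ ω : sphere (0 : E) 1, (∫⁻ r in Ioi (0 : ℝ),
      ENNReal.ofReal (r ^ (Module.finrank ℝ E - 1)) * f (r • (ω : E))) ∂μ.toSphere := by
  have hpolar := μ.measurePreserving_homeomorphUnitSphereProd.lintegral_comp_emb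
    (homeomorphUnitSphereProd E).measurableEmbedding (fun p => f ((p.2 : ℝ) • (p.1 : E)))
  have hcomp : ∀ z : ({0}ᶜ : Set E), f (((homeomorphUnitSphereProd E z).2 : ℝ) •
      ((homeomorphUnitSphereProd E z).1 : E)) = f z := fun z => by
    simp [smul_inv_smul₀ (norm_ne_zero_iff.2 z.2)]
  simp only [hcomp] at hpolar
  conv_lhs => rw [← restrict_compl_singleton (μ := μ) 0,
    ← lintegral_subtype_comap (measurableSet_singleton 0).compl, hpolar]
  rw [lintegral_prod _ (by fun_prop)]
  exact lintegral_congr fun ω => lintegral_volumeIoiPow _ (g := fun r => f (r • (ω : E)))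
    (by fun_prop)

end Polar

theorem lintegral_Ioi_rpow_neg_one_add {s d : ℝ} (hs : 0 < s) (hd : 0 < d) :
    ∫⁻ r in Ioi d, ENNReal.ofReal (r ^ (-(1 + s))) = ENNReal.ofReal (1 / (s * d ^ s)) := by
  rw [← ofReal_integral_eq_lintegral_ofReal (integrableOn_Ioi_rpow_of_lt (by linarith) hd)
    ((ae_restrict_mem measurableSet_Ioi).mono fun r hr => Real.rpow_nonneg (hd.trans hr).le _),
    integral_Ioi_rpow_of_lt (by linarith) hd]
  congr 1
  rw [show -(1 + s) + 1 = -s by ring, Real.rpow_neg hd.le]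
  have := Real.rpow_pos_of_pos hd s
  field_simp

theorem pow_pred_mul_one_div_rpow_add {r : ℝ} (hr : 0 < r) {n : ℕ} (hn : 1 ≤ n) (s : ℝ) :
    r ^ (n - 1) * (1 / r ^ ((n : ℝ) + s)) = r ^ (-(1 + s)) := by
  rw [← Real.rpow_natCast, Nat.cast_sub hn, one_div, ← Real.rpow_neg hr.le,
    ← Real.rpow_add hr]
  ring_nf

section RayDist

variable {n : ℕ} {Ω : Set (EuclideanSpace ℝ (Fin n))} {x ω : EuclideanSpace ℝ (Fin n)}

theorem rayDist_le_abs {t : ℝ} (ht : x + t • ω ∉ Ω) : rayDist n Ω x ω ≤ |t| :=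
  csInf_le ⟨0, by rintro _ ⟨s, -, rfl⟩; exact abs_nonneg s⟩ ⟨t, ht, rfl⟩

theorem rayDist_pos (hΩ : IsOpen Ω) (hx : x ∈ Ω) {t : ℝ} (ht : x + t • ω ∉ Ω) :
    0 < rayDist n Ω x ω := by
  have hray : {s : ℝ | x + s • ω ∈ Ω} ∈ nhds 0 :=
    (hΩ.preimage (by fun_prop)).mem_nhds (by simpa using hx)
  obtain ⟨ε, hε, hball⟩ := Metric.mem_nhds_iff.1 hray
  refine hε.trans_le (le_csInf ⟨|t|, t, ht, rfl⟩ ?_)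
  rintro _ ⟨s, hs, rfl⟩
  by_contra! hlt
  exact hs (hball (by simpa using hlt))

theorem lintegral_Ioi_indicator_rpow_le_rayDist (hΩ : IsOpen Ω) (hx : x ∈ Ω) {s : ℝ}
    (hs : 0 < s) :
    ∫⁻ r in Ioi (0 : ℝ),
        {r : ℝ | x + r • ω ∉ Ω}.indicator (fun r => ENNReal.ofReal (r ^ (-(1 + s)))) r ≤
      ENNReal.ofReal (1 / (s * rayDist n Ω x ω ^ s)) := by
  have hS : MeasurableSet {r : ℝ | x + r • ω ∉ Ω} :=
    (hΩ.isClosed_compl.preimage (by fun_prop)).measurableSet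
  rw [lintegral_indicator hS, Measure.restrict_restrict hS]
  -- If the ray never leaves `Ω`, `rayDist` is the junk value `sInf ∅ = 0`; the integral is `0`.
  rcases eq_empty_or_nonempty {r : ℝ | x + r • ω ∉ Ω} with hempty | ⟨t, ht⟩
  · simp [hempty]
  calc _ ≤ ∫⁻ r in Ici (rayDist n Ω x ω), ENNReal.ofReal (r ^ (-(1 + s))) :=
        lintegral_mono_set fun r hr => (rayDist_le_abs hr.1).trans_eq (abs_of_pos hr.2)
    _ = ENNReal.ofReal (1 / (s * rayDist n Ω x ω ^ s)) := by
        rw [← setLIntegral_congr Ioi_ae_eq_Ici,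
          lintegral_Ioi_rpow_neg_one_add hs (rayDist_pos hΩ hx ht)]

end RayDist

theorem stmt_1_general (n : ℕ) (hn : 1 ≤ n) (σ : ℝ) (hσ : σ ∈ Set.Ioo (0 : ℝ) 1)
    (Ω : Set (EuclideanSpace ℝ (Fin n))) (hΩ : IsOpen Ω)
    (x : EuclideanSpace ℝ (Fin n)) (hx : x ∈ Ω) :
    (∫⁻ y in Ωᶜ, ENNReal.ofReal (1 / ‖x - y‖ ^ ((n : ℝ) + 2 * σ))) ≤
      ∫⁻ ω : Metric.sphere (0 : EuclideanSpace ℝ (Fin n)) 1,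
        ENNReal.ofReal (1 / (2 * σ * rayDist n Ω x (ω : EuclideanSpace ℝ (Fin n)) ^ (2 * σ)))
        ∂((volume : Measure (EuclideanSpace ℝ (Fin n))).toSphere) := by
  have : Nonempty (Fin n) := ⟨⟨0, hn⟩⟩
  set K : EuclideanSpace ℝ (Fin n) → ℝ≥0∞ :=
    fun z => ENNReal.ofReal (1 / ‖z‖ ^ ((n : ℝ) + 2 * σ))
  set T := (x + ·) ⁻¹' Ωᶜ
  have hT : MeasurableSet T := (hΩ.isClosed_compl.preimage (by fun_prop)).measurableSet
  have hshift : ∫⁻ y in Ωᶜ, ENNReal.ofReal (1 / ‖x - y‖ ^ ((n : ℝ) + 2 * σ)) =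
      ∫⁻ z, T.indicator K z := by
    rw [lintegral_indicator hT,
      ← (measurePreserving_add_left volume x).setLIntegral_comp_preimage_emb
        (measurableEmbedding_addLeft x)]
    simp only [K, sub_add_cancel_left, norm_neg, T]
  rw [hshift, lintegral_eq_lintegral_sphere_lintegral_Ioi volume
    ((by fun_prop : Measurable K).indicator hT), finrank_euclideanSpace_fin]
  refine lintegral_mono fun ω => le_of_eq_of_le ?_
    (lintegral_Ioi_indicator_rpow_le_rayDist hΩ hx (by linarith [hσ.1]))
  refine setLIntegral_congr_fun measurableSet_Ioi fun r (hr : 0 < r) => ?_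
  by_cases h : x + r • (ω : EuclideanSpace ℝ (Fin n)) ∈ Ω
  · simp [T, h]
  · rw [indicator_of_mem (show r • (ω : EuclideanSpace ℝ (Fin n)) ∈ T from h),
      indicator_of_mem
        (show r ∈ {r : ℝ | x + r • (ω : EuclideanSpace ℝ (Fin n)) ∉ Ω} from h)]
    simp only [K, norm_smul, norm_eq_of_mem_sphere, Real.norm_of_nonneg hr.le, mul_one]
    rw [← ENNReal.ofReal_mul (by positivity), pow_pred_mul_one_div_rpow_add hr hn]

/-- for `x` in an open set `Ω ⊊ ℝⁿ`,
`∫_{ℝⁿ∖Ω} |x-y|^{-(n+2σ)} dy ≤ ∫_{S^{n-1}} (2σ d_{ω,Ω}(x)^{2σ})^{-1} dω`. -/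
theorem stmt_1 (n : ℕ) (hn : 1 ≤ n) (σ : ℝ) (hσ : σ ∈ Set.Ioo (0 : ℝ) 1)
    (Ω : Set (EuclideanSpace ℝ (Fin n))) (hΩ : IsOpen Ω) (hne : Ω ≠ Set.univ)
    (x : EuclideanSpace ℝ (Fin n)) (hx : x ∈ Ω) :
    (∫⁻ y in Ωᶜ, ENNReal.ofReal (1 / ‖x - y‖ ^ ((n : ℝ) + 2 * σ))) ≤
      ∫⁻ ω : Metric.sphere (0 : EuclideanSpace ℝ (Fin n)) 1,
        ENNReal.ofReal (1 / (2 * σ * rayDist n Ω x (ω : EuclideanSpace ℝ (Fin n)) ^ (2 * σ)))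
        ∂((volume : Measure (EuclideanSpace ℝ (Fin n))).toSphere) :=
  stmt_1_general n hn σ hσ Ω hΩ x hx
end

section
/- Let u ≥ 0 with ∫ u² = 1 be written as u = Σᵢ uᵢ where the uᵢ are nonzero, nonnegative, and have pairwise a.e.-disjoint positivity sets. Then the Gagliardo energies over positivity sets satisfy Σᵢ ∬_{{uᵢ>0}×{uᵢ>0}} (uᵢ(x)-uᵢ(y))²/|x-y|^{n+2σ} dx dy ≤ ∬_{{u>0}×{u>0}} (u(x)-u(y))²/|x-y|^{n+2σ} dx dy, and Σᵢ ∫ uᵢ² = 1, Σᵢ |{uᵢ > 0}| = |{u > 0}|. -/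
/-!
Off a null set at most one `uᵢ` is positive at each point, so `u = uᵢ` on `{uᵢ > 0}`,
`u² = Σᵢ uᵢ²`, and `{u > 0}` is the a.e.-disjoint union of the sets `{uᵢ > 0}`. The energy of `u`
over `{u > 0} × {u > 0}` then splits into the diagonal blocks `{uᵢ > 0} × {uᵢ > 0}`, which carry
the energies of the `uᵢ`, plus the nonnegative cross terms.
-/

open MeasureTheory ENNReal
open scoped Function

/-- The Gagliardo energy of `u` over `A × A`. -/
noncomputable def gagliardo (n : ℕ) (σ : ℝ) (A : Set (EuclideanSpace ℝ (Fin n)))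
    (u : EuclideanSpace ℝ (Fin n) → ℝ) : ℝ≥0∞ :=
  ∫⁻ x in A, ∫⁻ y in A, ENNReal.ofReal ((u x - u y) ^ 2 / ‖x - y‖ ^ ((n : ℝ) + 2 * σ))

lemma Finset.sq_sum_eq_sum_sq_of_mul_eq_zero {ι R : Type*} [CommSemiring R] {s : Finset ι}
    {f : ι → R} (h : ∀ i ∈ s, ∀ j ∈ s, i ≠ j → f i * f j = 0) :
    (∑ i ∈ s, f i) ^ 2 = ∑ i ∈ s, f i ^ 2 := by
  rw [sq, Finset.sum_mul_sum]
  refine Finset.sum_congr rfl fun i hi => ?_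
  rw [sq, Finset.sum_eq_single_of_mem i hi fun j hj hji => h i hi j hj hji.symm]

lemma sum_setLIntegral_setLIntegral_le_iUnion {α ι : Type*} [MeasurableSpace α] {μ : Measure α}
    [Fintype ι] {A : ι → Set α} (hA : ∀ i, NullMeasurableSet (A i) μ)
    (hd : Pairwise (AEDisjoint μ on A)) (F : α → α → ℝ≥0∞) :
    ∑ i, ∫⁻ x in A i, ∫⁻ y in A i, F x y ∂μ ∂μ ≤
      ∫⁻ x in ⋃ i, A i, ∫⁻ y in ⋃ i, A i, F x y ∂μ ∂μ := by
  rw [lintegral_iUnion₀ hA hd, tsum_fintype]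
  gcongr with i
  exact Set.subset_iUnion A i

lemma setOf_sum_pos_eq_iUnion {α ι : Type*} [Fintype ι] {u : ι → α → ℝ}
    (hnn : ∀ i x, 0 ≤ u i x) :
    {x | 0 < ∑ i, u i x} = ⋃ i, {x | 0 < u i x} := by
  ext x
  simp [Finset.sum_pos_iff_of_nonneg fun i _ => hnn i x]

section DisjointPositivitySets

variable {α ι : Type*} [MeasurableSpace α] {μ : Measure α} [Fintype ι] {u : ι → α → ℝ}

lemma ae_mul_eq_zero_of_aedisjoint (hnn : ∀ i x, 0 ≤ u i x)
    (hd : Pairwise (AEDisjoint μ on fun i => {x | 0 < u i x})) :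
    ∀ᵐ x ∂μ, ∀ i j, i ≠ j → u i x * u j x = 0 := by
  have h : ∀ i j, ∀ᵐ x ∂μ, i ≠ j → u i x * u j x = 0 := by
    intro i j
    by_cases hij : i = j
    · exact Filter.Eventually.of_forall fun _ h => absurd hij h
    filter_upwards [measure_eq_zero_iff_ae_notMem.1 (hd hij)] with x hx _
    by_contra hne
    exact hx ⟨(hnn i x).lt_of_ne' (left_ne_zero_of_mul hne),
      (hnn j x).lt_of_ne' (right_ne_zero_of_mul hne)⟩
  simpa only [ae_all_iff] using h

lemma ae_sum_eq_of_pos (hnn : ∀ i x, 0 ≤ u i x)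
    (hd : Pairwise (AEDisjoint μ on fun i => {x | 0 < u i x})) :
    ∀ᵐ x ∂μ, ∀ i, 0 < u i x → ∑ j, u j x = u i x := by
  filter_upwards [ae_mul_eq_zero_of_aedisjoint hnn hd] with x hx i hi
  exact Fintype.sum_eq_single i fun j hj => (mul_eq_zero.1 (hx i j hj.symm)).resolve_left hi.ne'

lemma sum_lintegral_ofReal_sq (hmeas : ∀ i, AEMeasurable (u i) μ) (hnn : ∀ i x, 0 ≤ u i x)
    (hd : Pairwise (AEDisjoint μ on fun i => {x | 0 < u i x})) :
    ∑ i, ∫⁻ x, ENNReal.ofReal (u i x ^ 2) ∂μ = ∫⁻ x, ENNReal.ofReal ((∑ i, u i x) ^ 2) ∂μ := by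
  rw [← lintegral_finsetSum' _ fun i _ => ((hmeas i).pow_const 2).ennreal_ofReal]
  refine lintegral_congr_ae ?_
  filter_upwards [ae_mul_eq_zero_of_aedisjoint hnn hd] with x hx
  rw [Finset.sq_sum_eq_sum_sq_of_mul_eq_zero fun i _ j _ => hx i j,
    ENNReal.ofReal_sum_of_nonneg fun i _ => sq_nonneg _]

lemma sum_measure_setOf_pos (hmeas : ∀ i, AEMeasurable (u i) μ) (hnn : ∀ i x, 0 ≤ u i x)
    (hd : Pairwise (AEDisjoint μ on fun i => {x | 0 < u i x})) :
    ∑ i, μ {x | 0 < u i x} = μ {x | 0 < ∑ i, u i x} := by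
  rw [setOf_sum_pos_eq_iUnion hnn,
    measure_iUnion₀ hd fun i => nullMeasurableSet_lt aemeasurable_const (hmeas i), tsum_fintype]

end DisjointPositivitySets

lemma gagliardo_congr_ae {n : ℕ} {σ : ℝ} {A : Set (EuclideanSpace ℝ (Fin n))}
    {u v : EuclideanSpace ℝ (Fin n) → ℝ} (hA : NullMeasurableSet A)
    (h : ∀ᵐ x, x ∈ A → u x = v x) :
    gagliardo n σ A u = gagliardo n σ A v := by
  have h' : ∀ᵐ x ∂volume.restrict A, u x = v x := (ae_restrict_iff'₀ hA).2 h
  unfold gagliardo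
  refine lintegral_congr_ae (h'.mono fun x hx => lintegral_congr_ae (h'.mono fun y hy => ?_))
  simp only [hx, hy]

theorem sum_gagliardo_setOf_pos_le {ι : Type*} [Fintype ι] (n : ℕ) (σ : ℝ)
    (u : ι → EuclideanSpace ℝ (Fin n) → ℝ) (hmeas : ∀ i, AEMeasurable (u i))
    (hnn : ∀ i x, 0 ≤ u i x) (hd : Pairwise (AEDisjoint volume on fun i => {x | 0 < u i x})) :
    ∑ i, gagliardo n σ {x | 0 < u i x} (u i) ≤
      gagliardo n σ {x | 0 < ∑ i, u i x} (fun x => ∑ i, u i x) := by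
  have hA i : NullMeasurableSet {x | 0 < u i x} := nullMeasurableSet_lt aemeasurable_const (hmeas i)
  calc ∑ i, gagliardo n σ {x | 0 < u i x} (u i)
      = ∑ i, gagliardo n σ {x | 0 < u i x} (fun x => ∑ j, u j x) := by
        refine Finset.sum_congr rfl fun i _ => gagliardo_congr_ae (hA i) ?_
        filter_upwards [ae_sum_eq_of_pos hnn hd] with x hx hi using (hx i hi).symm
    _ ≤ gagliardo n σ (⋃ i, {x | 0 < u i x}) (fun x => ∑ j, u j x) :=
        sum_setLIntegral_setLIntegral_le_iUnion hA hd _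
    _ = gagliardo n σ {x | 0 < ∑ i, u i x} (fun x => ∑ i, u i x) := by
        rw [setOf_sum_pos_eq_iUnion hnn]

theorem stmt_15_general (n : ℕ) (σ : ℝ)
    (m : ℕ) (u : Fin m → EuclideanSpace ℝ (Fin n) → ℝ)
    (hmeas : ∀ i, Measurable (u i)) (hnn : ∀ i x, 0 ≤ u i x)
    (hdisj : ∀ i j, i ≠ j → volume ({x | 0 < u i x} ∩ {x | 0 < u j x}) = 0)
    (hnorm : (∫⁻ x, ENNReal.ofReal ((∑ i, u i x) ^ 2)) = 1) :
    (∑ i, gagliardo n σ {x | 0 < u i x} (u i)) ≤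
        gagliardo n σ {x | 0 < ∑ i, u i x} (fun x => ∑ i, u i x) ∧
      (∑ i, ∫⁻ x, ENNReal.ofReal (u i x ^ 2)) = 1 ∧
      (∑ i, volume {x | 0 < u i x}) = volume {x | 0 < ∑ i, u i x} := by
  have hd : Pairwise (AEDisjoint volume on fun i => {x | 0 < u i x}) := fun i j h => hdisj i j h
  have hmeas' i : AEMeasurable (u i) := (hmeas i).aemeasurable
  exact ⟨sum_gagliardo_setOf_pos_le n σ u hmeas' hnn hd,
    (sum_lintegral_ofReal_sq hmeas' hnn hd).trans hnorm, sum_measure_setOf_pos hmeas' hnn hd⟩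

/-- if `u = Σᵢ uᵢ` with the `uᵢ` nonzero, nonnegative and with pairwise
a.e.-disjoint positivity sets and `∫ u² = 1`, then the energies over positivity sets add up to
at most the energy of `u`, the `L²` masses add to `1`, and the positivity measures add up. -/
theorem stmt_15 (n : ℕ) (hn : 1 ≤ n) (σ : ℝ) (hσ : σ ∈ Set.Ioo (0 : ℝ) 1)
    (m : ℕ) (u : Fin m → EuclideanSpace ℝ (Fin n) → ℝ)
    (hmeas : ∀ i, Measurable (u i)) (hnn : ∀ i x, 0 ≤ u i x)
    (hnz : ∀ i, volume {x | u i x ≠ 0} ≠ 0)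
    (hdisj : ∀ i j, i ≠ j → volume ({x | 0 < u i x} ∩ {x | 0 < u j x}) = 0)
    (hnorm : (∫⁻ x, ENNReal.ofReal ((∑ i, u i x) ^ 2)) = 1) :
    (∑ i, gagliardo n σ {x | 0 < u i x} (u i)) ≤
        gagliardo n σ {x | 0 < ∑ i, u i x} (fun x => ∑ i, u i x) ∧
      (∑ i, ∫⁻ x, ENNReal.ofReal (u i x ^ 2)) = 1 ∧
      (∑ i, volume {x | 0 < u i x}) = volume {x | 0 < ∑ i, u i x} :=
  stmt_15_general n σ m u hmeas hnn hdisj hnorm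
end
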